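/- For all t ≥ 0: (a) m_2^{(1)}(4, 3t+2) = 15t + 8; (b) m_2^{(1)}(4, 3t+3) = 15t + 15; (c) m_2^{(1)}(4, 3t+4) = 15t + 16. Here m_2^{(1)}(4, w) is the maximum size of a multiset of points in PG(3,2) such that every line contains at most w points (counted with multiplicity). -/

import Mathlib

/-! Over `𝔽₂` every point of `PG(3,2)` is spanned by exactly one nonzero vector, so a multiset
of points is a function `f` on the fifteen nonzero vectors, and the line through `u ≠ v` has
multiplicity `f u + f v + f (u + v)`. The seven lines through a point `v` partition the other
fourteen points, so adding up their bounds gives `6 f(v) + |K| ≤ 7 w`. If `|K|` exceeded the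
claimed value `n`, every point would have multiplicity at most some `c` with `15 c ≤ n`, which is
absurd. The values are attained by `t` copies of `PG(3,2)` together with an affine solid, with one
more copy, or with one more copy and one more point. -/

open Module

/-- Multiplicity of a subspace `S` with respect to a multiset of points `K` of `PG(3,2)`. -/
noncomputable def msMult (K : Submodule (ZMod 2) (Fin 4 → ZMod 2) → ℕ)
    (S : Submodule (ZMod 2) (Fin 4 → ZMod 2)) : ℕ :=
  ∑ᶠ P ∈ {P : Submodule (ZMod 2) (Fin 4 → ZMod 2) | finrank (ZMod 2) P = 1 ∧ P ≤ S}, K P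

/-- `m_2^{(1)}(4, w)`: the maximal total multiplicity of a multiset of points in `PG(3,2)`
such that every line (2-dimensional linear subspace) has multiplicity at most `w`. -/
noncomputable def m214 (w : ℕ) : Set ℕ :=
  {n | ∃ K : Submodule (ZMod 2) (Fin 4 → ZMod 2) → ℕ,
    (∀ S : Submodule (ZMod 2) (Fin 4 → ZMod 2), finrank (ZMod 2) S = 2 → msMult K S ≤ w) ∧
    msMult K ⊤ = n}

open Submodule Finset

section DivisionRing

variable {K V : Type*} [DivisionRing K] [AddCommGroup V] [Module K V]

theorem Submodule.finrank_eq_one_iff_exists_eq_span_singleton {P : Submodule K V} :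
    finrank K P = 1 ↔ ∃ v ≠ 0, P = K ∙ v := by
  constructor
  · intro h
    have : FiniteDimensional K P := Module.finite_of_finrank_eq_succ h
    obtain ⟨v, hvP, hv⟩ := P.exists_mem_ne_zero_of_ne_bot fun hP => by
      rw [hP, finrank_bot] at h; exact zero_ne_one h
    refine ⟨v, hv, (eq_of_le_of_finrank_eq ((span_singleton_le_iff_mem v P).2 hvP) ?_).symm⟩
    rw [finrank_span_singleton hv, h]
  · rintro ⟨v, hv, rfl⟩
    exact finrank_span_singleton hv

theorem Submodule.exists_eq_span_pair_of_finrank_eq_two {S : Submodule K V}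
    (hS : finrank K S = 2) : ∃ u v : V, u ≠ 0 ∧ v ≠ 0 ∧ u ≠ v ∧ S = span K {u, v} := by
  have : FiniteDimensional K S := Module.finite_of_finrank_eq_succ hS
  let b : Basis (Fin 2) K S := Module.finBasisOfFinrankEq K S hS
  refine ⟨b 0, b 1, by simpa using b.ne_zero 0, by simpa using b.ne_zero 1,
    fun h => by simpa using b.injective (Subtype.val_injective h), ?_⟩
  have := congrArg (map S.subtype) b.span_eq
  rw [map_span, map_subtype_top, ← Set.range_comp] at this
  refine this.symm.trans (congrArg (span K) ?_)
  ext w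
  simp [Fin.exists_fin_two, eq_comm]

end DivisionRing

theorem ZMod.eq_zero_or_eq_one (c : ZMod 2) : c = 0 ∨ c = 1 := by
  revert c
  decide

section ZModTwo

variable {V : Type*} [AddCommGroup V] [Module (ZMod 2) V]

namespace ZModModule

theorem mem_span_singleton_iff {v w : V} : w ∈ ZMod 2 ∙ v ↔ w = 0 ∨ w = v := by
  rw [Submodule.mem_span_singleton]
  constructor
  · rintro ⟨c, rfl⟩
    rcases c.eq_zero_or_eq_one with rfl | rfl <;> simp
  · rintro (rfl | rfl)
    exacts [⟨0, zero_smul _ _⟩, ⟨1, one_smul _ _⟩]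

theorem eq_of_span_singleton_eq {u v : V} (hu : u ≠ 0) (h : (ZMod 2 ∙ u) = ZMod 2 ∙ v) :
    u = v :=
  (mem_span_singleton_iff.1 (h ▸ mem_span_singleton_self u)).resolve_left hu

theorem mem_span_pair_iff {u v w : V} :
    w ∈ span (ZMod 2) {u, v} ↔ w = 0 ∨ w = u ∨ w = v ∨ w = u + v := by
  rw [Submodule.mem_span_pair]
  constructor
  · rintro ⟨a, b, rfl⟩
    rcases a.eq_zero_or_eq_one with rfl | rfl <;>
      rcases b.eq_zero_or_eq_one with rfl | rfl <;> simp
  · rintro (rfl | rfl | rfl | rfl)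
    exacts [⟨0, 0, by simp⟩, ⟨1, 0, by simp⟩, ⟨0, 1, by simp⟩, ⟨1, 1, by simp⟩]

theorem add_eq_zero_iff {u v : V} : u + v = 0 ↔ u = v := by
  rw [add_eq_zero_iff_eq_neg, neg_eq_self]

theorem finrank_span_pair {u v : V} (hu : u ≠ 0) (hv : v ≠ 0) (huv : u ≠ v) :
    finrank (ZMod 2) (span (ZMod 2) {u, v}) = 2 := by
  have hli : LinearIndependent (ZMod 2) ![u, v] := by
    refine (LinearIndependent.pair_iff' hu).2 fun a => ?_
    rcases a.eq_zero_or_eq_one with rfl | rfl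
    · simpa using hv.symm
    · simpa using huv
  have := finrank_span_eq_card hli
  rwa [Matrix.range_cons_cons_empty, Fintype.card_fin] at this

end ZModModule

end ZModTwo

local notation "𝔽₂⁴" => Fin 4 → ZMod 2

theorem msMult_eq_finsum (K : Submodule (ZMod 2) 𝔽₂⁴ → ℕ)
    (S : Submodule (ZMod 2) 𝔽₂⁴) :
    msMult K S = ∑ᶠ v ∈ {v : 𝔽₂⁴ | v ≠ 0 ∧ v ∈ S}, K (ZMod 2 ∙ v) := by
  have hpoints : {P : Submodule (ZMod 2) 𝔽₂⁴ | finrank (ZMod 2) P = 1 ∧ P ≤ S} =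
      (fun v => ZMod 2 ∙ v) '' {v | v ≠ 0 ∧ v ∈ S} := by
    ext P
    simp only [Set.mem_ofPred_eq, finrank_eq_one_iff_exists_eq_span_singleton, Set.mem_image]
    constructor
    · rintro ⟨⟨v, hv, rfl⟩, hle⟩
      exact ⟨v, ⟨hv, hle (mem_span_singleton_self v)⟩, rfl⟩
    · rintro ⟨v, ⟨hv, hvS⟩, rfl⟩
      exact ⟨⟨v, hv, rfl⟩, (span_singleton_le_iff_mem v S).2 hvS⟩
  rw [msMult, hpoints, finsum_mem_image]
  exact fun u hu v _ h => ZModModule.eq_of_span_singleton_eq hu.1 h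

theorem msMult_top (K : Submodule (ZMod 2) 𝔽₂⁴ → ℕ) :
    msMult K ⊤ = ∑ v ∈ {0}ᶜ, K (ZMod 2 ∙ v) := by
  rw [msMult_eq_finsum, ← finsum_mem_coe_finset]
  congr
  ext v
  simp

theorem msMult_span_pair (K : Submodule (ZMod 2) 𝔽₂⁴ → ℕ) {u v : 𝔽₂⁴}
    (hu : u ≠ 0) (hv : v ≠ 0) (huv : u ≠ v) :
    msMult K (span (ZMod 2) {u, v}) =
      K (ZMod 2 ∙ u) + K (ZMod 2 ∙ v) + K (ZMod 2 ∙ (u + v)) := by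
  have huv₀ : u + v ≠ 0 := ZModModule.add_eq_zero_iff.not.2 huv
  have hpoints :
      {w | w ≠ 0 ∧ w ∈ span (ZMod 2) {u, v}} = ↑({u, v, u + v} : Finset 𝔽₂⁴) := by
    ext w
    simp only [Set.mem_ofPred_eq, ZModModule.mem_span_pair_iff, coe_insert, coe_singleton,
      Set.mem_insert_iff, Set.mem_singleton_iff]
    constructor
    · rintro ⟨hw, rfl | h⟩
      exacts [absurd rfl hw, h]
    · rintro (rfl | rfl | rfl)
      exacts [⟨hu, by simp⟩, ⟨hv, by simp⟩, ⟨huv₀, by simp⟩]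
  rw [msMult_eq_finsum, hpoints, finsum_mem_coe_finset, sum_insert (by simp [huv, hv]),
    sum_pair (by simpa using hu), add_assoc]

theorem add_add_le_of_msMult_le {K : Submodule (ZMod 2) 𝔽₂⁴ → ℕ} {w : ℕ}
    (hK : ∀ S : Submodule (ZMod 2) 𝔽₂⁴, finrank (ZMod 2) S = 2 → msMult K S ≤ w)
    {u v : 𝔽₂⁴} (hu : u ≠ 0) (hv : v ≠ 0) (huv : u ≠ v) :
    K (ZMod 2 ∙ u) + K (ZMod 2 ∙ v) + K (ZMod 2 ∙ (u + v)) ≤ w :=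
  msMult_span_pair K hu hv huv ▸ hK _ (ZModModule.finrank_span_pair hu hv huv)

theorem six_mul_add_msMult_top_le {K : Submodule (ZMod 2) 𝔽₂⁴ → ℕ} {w : ℕ}
    (hK : ∀ S : Submodule (ZMod 2) 𝔽₂⁴, finrank (ZMod 2) S = 2 → msMult K S ≤ w)
    {v : 𝔽₂⁴} (hv : v ≠ 0) : 6 * K (ZMod 2 ∙ v) + msMult K ⊤ ≤ 7 * w := by
  set f : 𝔽₂⁴ → ℕ := fun x => K (ZMod 2 ∙ x)
  set s := ({0}ᶜ : Finset 𝔽₂⁴).erase v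
  have hvs : v ∈ ({0}ᶜ : Finset 𝔽₂⁴) := by simpa using hv
  have hs : #s = 14 := by rw [card_erase_of_mem hvs]; rfl
  -- Each of the seven lines through `v` is counted twice, as `{v, x, v + x}` and `{v, v + x, x}`.
  have hlines : ∑ x ∈ s, (f v + f x + f (v + x)) ≤ ∑ _x ∈ s, w :=
    sum_le_sum fun x hx => by
      obtain ⟨hxv, hx⟩ := mem_erase.1 hx
      exact add_add_le_of_msMult_le hK hv (by simpa using hx) hxv.symm
  have hshift : ∑ x ∈ s, f (v + x) = ∑ x ∈ s, f x :=
    sum_equiv (Equiv.addLeft v)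
      (fun x => by simp [s, ZModModule.add_eq_zero_iff, eq_comm, and_comm]) fun _ _ => rfl
  have htotal : f v + ∑ x ∈ s, f x = msMult K ⊤ := by
    rw [msMult_top]
    exact add_sum_erase _ f hvs
  rw [sum_add_distrib, sum_add_distrib, hshift, sum_const, sum_const, hs] at hlines
  simp only [smul_eq_mul] at hlines
  change 6 * f v + msMult K ⊤ ≤ 7 * w
  omega

theorem msMult_top_le {K : Submodule (ZMod 2) 𝔽₂⁴ → ℕ} {w : ℕ}
    (hK : ∀ S : Submodule (ZMod 2) 𝔽₂⁴, finrank (ZMod 2) S = 2 → msMult K S ≤ w)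
    {c n : ℕ} (hw : 7 * w ≤ 6 * c + n + 6) (hc : 15 * c ≤ n) : msMult K ⊤ ≤ n := by
  by_contra! hn
  have hpoint : ∀ v ∈ ({0}ᶜ : Finset 𝔽₂⁴), K (ZMod 2 ∙ v) ≤ c := fun v hv => by
    have := six_mul_add_msMult_top_le hK (v := v) (by simpa using hv)
    omega
  have := sum_le_card_nsmul _ _ c hpoint
  rw [← msMult_top, smul_eq_mul] at this
  change msMult K ⊤ ≤ 15 * c at this
  omega

theorem isGreatest_m214 {w n c : ℕ} (hn : n ∈ m214 w) (hw : 7 * w ≤ 6 * c + n + 6)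
    (hc : 15 * c ≤ n) : IsGreatest (m214 w) n :=
  ⟨hn, fun _ ⟨_, hK, hm⟩ => hm ▸ msMult_top_le hK hw hc⟩

theorem mem_m214_of_add_add_le {w n : ℕ} (f : 𝔽₂⁴ → ℕ)
    (hf : ∀ u v : 𝔽₂⁴, u ≠ 0 → v ≠ 0 → u ≠ v → f u + f v + f (u + v) ≤ w)
    (hn : ∑ v ∈ {0}ᶜ, f v = n) (t : ℕ) : 15 * t + n ∈ m214 (3 * t + w) := by
  let K (P : Submodule (ZMod 2) 𝔽₂⁴) : ℕ :=
    ∑ᶠ v ∈ {v | v ≠ 0 ∧ (ZMod 2 ∙ v) = P}, (t + f v)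
  have hK : ∀ v ≠ 0, K (ZMod 2 ∙ v) = t + f v := fun v hv => by
    have : {u | u ≠ 0 ∧ (ZMod 2 ∙ u) = ZMod 2 ∙ v} = {v} := by
      ext u
      exact ⟨fun ⟨hu, h⟩ => ZModModule.eq_of_span_singleton_eq hu h,
        fun h => ⟨h ▸ hv, h ▸ rfl⟩⟩
    simp only [K, this, finsum_mem_singleton]
  refine ⟨K, fun S hS => ?_, ?_⟩
  · obtain ⟨u, v, hu, hv, huv, rfl⟩ := exists_eq_span_pair_of_finrank_eq_two hS
    rw [msMult_span_pair K hu hv huv, hK u hu, hK v hv,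
      hK _ (ZModModule.add_eq_zero_iff.not.2 huv)]
    have := hf u v hu hv huv
    omega
  · rw [msMult_top, sum_congr rfl fun v hv => hK v (by simpa using hv), sum_add_distrib,
      sum_const, hn, smul_eq_mul]
    rfl

theorem mem_m214_affine_solid (t : ℕ) : 15 * t + 8 ∈ m214 (3 * t + 2) := by
  refine mem_m214_of_add_add_le (fun v => if v 3 = 1 then 1 else 0) (fun u v _ _ _ => ?_)
    (by decide) t
  have key : ∀ a b : ZMod 2,
      (if a = 1 then 1 else 0) + (if b = 1 then 1 else 0) + (if a + b = 1 then 1 else 0) ≤ 2 := by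
    decide
  exact key (u 3) (v 3)

theorem mem_m214_full_space (t : ℕ) : 15 * t + 15 ∈ m214 (3 * t + 3) :=
  mem_m214_of_add_add_le (fun _ => 1) (fun _ _ _ _ _ => le_rfl) (by decide) t

theorem mem_m214_full_space_add_point (t : ℕ) : 15 * t + 16 ∈ m214 (3 * t + 4) := by
  refine mem_m214_of_add_add_le (fun v => 1 + if v = Pi.single 0 1 then 1 else 0)
    (fun u v hu hv huv => ?_) (by decide) t
  split_ifs <;> simp_all

/-- For all `t ≥ 0`: `m_2^{(1)}(4, 3t+2) = 15t+8`, `m_2^{(1)}(4, 3t+3) = 15t+15`, and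
`m_2^{(1)}(4, 3t+4) = 15t+16`. -/
theorem stmt11 (t : ℕ) :
    IsGreatest (m214 (3 * t + 2)) (15 * t + 8) ∧
    IsGreatest (m214 (3 * t + 3)) (15 * t + 15) ∧
    IsGreatest (m214 (3 * t + 4)) (15 * t + 16) := by
  refine ⟨isGreatest_m214 (c := t) (mem_m214_affine_solid t) ?_ ?_,
    isGreatest_m214 (c := t) (mem_m214_full_space t) ?_ ?_,
    isGreatest_m214 (c := t + 1) (mem_m214_full_space_add_point t) ?_ ?_⟩ <;> omega
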